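/- arXiv:1404.5898 — 3 statements merged into one kernel-verified Lean document; each statement's English description precedes it below -/
import Mathlib

section
/- Let M₁, M₂, M₃ be three affinely independent points in the Euclidean plane ℝ² (so that they form a nondegenerate triangle), and let M be a point in the topological interior of the convex hull of {M₁, M₂, M₃}. Then the angle ∠M₁MM₃ is strictly greater than the angle ∠M₁M₂M₃. -/
/-!
Let the cevian from `M₁` through `M` meet the opposite side in `Q`, strictly between `M₂` and
`M₃`. The strict exterior angle inequality, applied in triangle `M₁M₂Q` and then in triangle
`M₃QM`, gives `∠ M₁ M₂ M₃ < ∠ M₁ Q M₃ < ∠ M₁ M M₃`.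
-/

open EuclideanGeometry

theorem exists_pos_weights_of_mem_interior_convexHull {ι E : Type*} [Fintype ι]
    [NormedAddCommGroup E] [NormedSpace ℝ E] {v : ι → E} (hv : AffineIndependent ℝ v) {p : E}
    (hp : p ∈ interior (convexHull ℝ (Set.range v))) :
    ∃ w : ι → ℝ, (∀ i, 0 < w i) ∧ ∑ i, w i = 1 ∧ ∑ i, w i • v i = p := by
  let b : AffineBasis ι ℝ E := ⟨v, hv, affineSpan_eq_top_of_nonempty_interior ⟨p, hp⟩⟩
  refine ⟨fun i ↦ b.coord i p, ?_, b.sum_coord_apply_eq_one p,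
    b.linear_combination_coord_eq_self p⟩
  rw [← Set.mem_ofPred_eq (p := fun x ↦ ∀ i, 0 < b.coord i x), ← b.interior_convexHull]
  exact hp

theorem exists_sbtw_sbtw_of_pos_weights {E : Type*} [AddCommGroup E] [Module ℝ E]
    {x y z p : E} (h : ¬Collinear ℝ {x, y, z}) {a b c : ℝ} (ha : 0 < a) (hb : 0 < b)
    (hc : 0 < c) (habc : a + b + c = 1) (hp : a • x + b • y + c • z = p) :
    ∃ q, Sbtw ℝ y q z ∧ Sbtw ℝ x p q := by
  have hbc : 0 < b + c := by positivity
  set q := AffineMap.lineMap y z (c / (b + c)) with hq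
  have hyqz : Sbtw ℝ y q z := sbtw_lineMap_iff.mpr
    ⟨ne₂₃_of_not_collinear h, div_pos hc hbc, (div_lt_one hbc).mpr (by linarith)⟩
  have hxq : x ≠ q := fun hxq ↦ h (collinear_insert_of_mem_affineSpan_pair
    (hxq ▸ hyqz.wbtw.mem_affineSpan))
  have hpq : p = AffineMap.lineMap x q (b + c) := by
    rw [← hp, hq, AffineMap.lineMap_apply_module, AffineMap.lineMap_apply_module, smul_add,
      smul_smul, smul_smul]
    field_simp
    rw [show 1 - (b + c) = a by linarith, add_sub_cancel_right, add_assoc]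
  exact ⟨q, hyqz, hpq ▸ sbtw_lineMap_iff.mpr ⟨hxq, hbc, by linarith⟩⟩

section Angle

variable {V P : Type*} [NormedAddCommGroup V] [InnerProductSpace ℝ V] [MetricSpace P]
  [NormedAddTorsor V P]

theorem not_collinear_of_sbtw {a b c d : P} (h : Sbtw ℝ a b c) (hd : ¬Collinear ℝ {d, a, c}) :
    ¬Collinear ℝ {d, b, c} := by
  rw [Set.pair_comm a c, ← affineIndependent_iff_not_collinear_set] at hd
  rw [Set.pair_comm b c, ← affineIndependent_iff_not_collinear_set]
  refine affineIndependent_of_affineIndependent_collinear_ne hd ?_ h.ne_right.symm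
  rw [Set.insert_comm c a, Set.pair_comm c b]
  exact h.wbtw.collinear

theorem angle_lt_angle_of_sbtw {a b c d : P} (h : Sbtw ℝ a b c) (hd : ¬Collinear ℝ {d, a, c}) :
    ∠ d a c < ∠ d b c := by
  have hdab : ¬Collinear ℝ {b, d, a} := by
    rw [Set.insert_comm b d]
    exact not_collinear_of_sbtw h.symm (by rwa [Set.pair_comm c a])
  rw [← h.angle_eq_right d, exterior_angle_eq_angle_add_angle c h.symm]
  linarith [angle_pos_of_not_collinear hdab]

end Angle

theorem angle_gt_of_mem_interior_triangle
    (M₁ M₂ M₃ M : EuclideanSpace ℝ (Fin 2))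
    (hind : AffineIndependent ℝ ![M₁, M₂, M₃])
    (hM : M ∈ interior (convexHull ℝ {M₁, M₂, M₃})) :
    EuclideanGeometry.angle M₁ M M₃ > EuclideanGeometry.angle M₁ M₂ M₃ := by
  have hT : ¬Collinear ℝ {M₁, M₂, M₃} := affineIndependent_iff_not_collinear_set.mp hind
  have hrange : Set.range ![M₁, M₂, M₃] = {M₁, M₂, M₃} := by
    rw [Matrix.range_cons, Matrix.range_cons_cons_empty, Set.singleton_union]
  obtain ⟨w, hw, hw1, hwM⟩ :=
    exists_pos_weights_of_mem_interior_convexHull hind (hrange ▸ hM)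
  simp only [Fin.sum_univ_three, Matrix.cons_val_zero, Matrix.cons_val_one,
    Matrix.cons_val_two] at hw1 hwM
  obtain ⟨Q, hM₂QM₃, hM₁MQ⟩ := exists_sbtw_sbtw_of_pos_weights hT (hw 0) (hw 1) (hw 2) hw1 hwM
  have hQ : ¬Collinear ℝ {M₃, Q, M₁} := by
    rw [Set.insert_comm M₃, Set.pair_comm M₃, Set.insert_comm Q]
    exact not_collinear_of_sbtw hM₂QM₃ hT
  calc ∠ M₁ M₂ M₃ < ∠ M₁ Q M₃ := angle_lt_angle_of_sbtw hM₂QM₃ hT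
    _ = ∠ M₃ Q M₁ := angle_comm _ _ _
    _ < ∠ M₃ M M₁ := angle_lt_angle_of_sbtw hM₁MQ.symm hQ
    _ = ∠ M₁ M M₃ := angle_comm _ _ _
end

section
/- Let P₁, P₂, P₃ be three affinely independent points in the Euclidean plane ℝ² such that all three interior angles of the triangle P₁P₂P₃ (namely ∠P₂P₁P₃, ∠P₁P₂P₃, ∠P₁P₃P₂) are strictly less than 2π/3. Then there exists a unique point F in the interior of the convex hull of {P₁, P₂, P₃} satisfying ∠P₁FP₂ = ∠P₂FP₃ = ∠P₃FP₁ = 2π/3. -/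
/-!
The required point is the Fermat point, a minimiser `F` of the sum of distances `∑ dist X Pᵢ`, which exists
since this sum is coercive. At a vertex `Pᵢ` the other two distances have gradient of norm
`‖uⱼ + uₖ‖ > 1` (with `uⱼ, uₖ` the unit vectors along the two edges, meeting at an angle
`< 2π/3`), which beats the unit slope of `dist · Pᵢ`, so `F` is no vertex. Elsewhere the sum is
differentiable, so the unit vectors from `F` towards the vertices add up to zero: they meet pairwise
at `2π/3`, and `F` is a combination of the vertices with positive weights `1 / dist F Pᵢ`, hence
interior. Conversely, if the unit vectors `uᵢ` at a point `F` sum to zero, Cauchy–Schwarz gives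
`∑ dist Y Pᵢ ≥ ∑ ⟪Pᵢ - Y, uᵢ⟫ = ∑ dist F Pᵢ`; for a second such point `Y` equality holds, which forces
`Y - F` to be parallel to two non-parallel `uᵢ`.
-/

open Real NormedSpace InnerProductGeometry Set Filter Topology
open scoped RealInnerProductSpace

variable {E : Type*} [NormedAddCommGroup E] [InnerProductSpace ℝ E]

theorem hasFDerivAt_norm_of_ne_zero {x : E} (hx : x ≠ 0) :
    HasFDerivAt (‖·‖) (innerSL ℝ (normalize x)) x := by
  have h := (hasStrictFDerivAt_norm_sq x).hasFDerivAt.sqrt (by simpa using hx)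
  simp only [Real.sqrt_sq (norm_nonneg _)] at h
  refine h.congr_fderiv ?_
  rw [NormedSpace.normalize, map_smul, two_smul, ← two_smul ℝ, smul_smul]
  field_simp

theorem hasFDerivAt_dist_left {x p : E} (h : x ≠ p) :
    HasFDerivAt (dist · p) (innerSL ℝ (normalize (x - p))) x := by
  simp only [dist_eq_norm]
  exact (hasFDerivAt_norm_of_ne_zero (sub_ne_zero.mpr h)).comp x ((hasFDerivAt_id x).sub_const p)

theorem real_inner_self_normalize (x : E) : ⟪x, normalize x⟫ = ‖x‖ := by
  rw [NormedSpace.normalize, real_inner_smul_right, real_inner_self_eq_norm_sq]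
  rcases eq_or_ne ‖x‖ 0 with hx | hx
  · simp [hx]
  · field_simp

theorem norm_normalize_le_one (x : E) : ‖normalize x‖ ≤ 1 := by
  rcases eq_or_ne x 0 with rfl | hx
  · simp
  · exact (norm_normalize hx).le

theorem norm_le_one_of_isLocalMin_dist_add {g : E → ℝ} {a v : E}
    (hg : HasFDerivAt g (innerSL ℝ v) a) (hmin : IsLocalMin (fun x ↦ dist x a + g x) a) :
    ‖v‖ ≤ 1 := by
  set φ : ℝ → ℝ := fun t ↦ t * ‖v‖ + g (a - t • v)
  have hline : HasDerivAt (fun t : ℝ ↦ a - t • v) (-v) 0 := by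
    simpa using ((hasDerivAt_id (0 : ℝ)).smul_const v).const_sub a
  have hφ : HasDerivAt φ (‖v‖ - ‖v‖ ^ 2) 0 := by
    refine (((hasDerivAt_id (0 : ℝ)).mul_const ‖v‖).add
      (hg.comp_hasDerivAt_of_eq (x := (0 : ℝ)) hline (by simp))).congr_deriv ?_
    simp [sub_eq_add_neg]
  -- along the ray `a - t • v`, `t ≥ 0`, the distance to `a` is the smooth function `t * ‖v‖`
  have hφmin : IsLocalMinOn φ (Ici 0) 0 := by
    have hto : Tendsto (fun t : ℝ ↦ a - t • v) (𝓝[≥] 0) (𝓝 a) := by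
      simpa using hline.continuousAt.tendsto.mono_left nhdsWithin_le_nhds
    filter_upwards [hto.eventually hmin, self_mem_nhdsWithin] with t ht (ht0 : 0 ≤ t)
    simpa [φ, dist_eq_norm, norm_smul, abs_of_nonneg ht0] using ht
  have := hφmin.hasFDerivWithinAt_nonneg hφ.hasFDerivAt.hasFDerivWithinAt (y := 1)
    (mem_posTangentConeAt_of_segment_subset (by simp [segment_eq_Icc, Icc_subset_Ici_self]))
  simp only [ContinuousLinearMap.toSpanSingleton_apply, smul_eq_mul, one_mul, sub_nonneg] at this
  nlinarith [norm_nonneg v]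

section SumDist

variable {ι α : Type*} [Fintype ι] [PseudoMetricSpace α]

def sumDist (P : ι → α) (x : α) : ℝ := ∑ i, dist x (P i)

theorem continuous_sumDist (P : ι → α) : Continuous (sumDist P) := by
  unfold sumDist; fun_prop

theorem exists_forall_sumDist_le [ProperSpace α] [Nonempty ι] (P : ι → α) :
    ∃ x, ∀ y, sumDist P x ≤ sumDist P y := by
  obtain ⟨i⟩ := ‹Nonempty ι›
  have : Nonempty α := ⟨P i⟩
  refine (continuous_sumDist P).exists_forall_le <|
    tendsto_atTop_mono (fun y ↦ ?_) (tendsto_dist_right_cocompact_atTop (P i))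
  exact Finset.single_le_sum (f := fun j ↦ dist y (P j)) (fun _ _ ↦ dist_nonneg)
    (Finset.mem_univ i)

theorem hasFDerivAt_sumDist {P : ι → E} {x : E} (h : ∀ i, x ≠ P i) :
    HasFDerivAt (sumDist P) (innerSL ℝ (∑ i, normalize (x - P i))) x := by
  rw [map_sum]
  exact HasFDerivAt.fun_sum fun i _ ↦ hasFDerivAt_dist_left (h i)

theorem sum_normalize_eq_zero_of_isLocalMin {P : ι → E} {x : E}
    (hmin : IsLocalMin (sumDist P) x) (h : ∀ i, x ≠ P i) : ∑ i, normalize (P i - x) = 0 := by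
  have h0 := congrArg (‖·‖) (hmin.hasFDerivAt_eq_zero (hasFDerivAt_sumDist h))
  simp only [innerSL_apply_norm, norm_zero, norm_eq_zero] at h0
  rw [← neg_eq_zero, ← Finset.sum_neg_distrib, ← h0]
  simp only [← normalize_neg, neg_sub]

theorem norm_sum_normalize_le_one_of_isLocalMin {P : ι → E} {i : ι}
    (hmin : IsLocalMin (sumDist P) (P i)) (hP : ∀ j ≠ i, P j ≠ P i) :
    ‖∑ j, normalize (P j - P i)‖ ≤ 1 := by
  classical
  have hsplit : sumDist P = fun x ↦ dist x (P i) + ∑ j ∈ Finset.univ.erase i, dist x (P j) := by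
    ext x; exact (Finset.add_sum_erase _ _ (Finset.mem_univ i)).symm
  have hg : HasFDerivAt (fun x ↦ ∑ j ∈ Finset.univ.erase i, dist x (P j))
      (innerSL ℝ (-∑ j, normalize (P j - P i))) (P i) := by
    rw [← Finset.sum_erase (f := fun j ↦ normalize (P j - P i)) (a := i) _ (by simp),
      ← Finset.sum_neg_distrib, map_sum]
    refine HasFDerivAt.fun_sum fun j hj ↦ ?_
    rw [← normalize_neg, neg_sub]
    exact hasFDerivAt_dist_left (hP j (Finset.ne_of_mem_erase hj)).symm
  rw [hsplit] at hmin
  simpa using norm_le_one_of_isLocalMin_dist_add hg hmin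

theorem exists_ne_and_sum_normalize_eq_zero [ProperSpace E] [Nonempty ι] {P : ι → E}
    (hP : Function.Injective P) (h : ∀ i, 1 < ‖∑ j, normalize (P j - P i)‖) :
    ∃ x, (∀ i, x ≠ P i) ∧ ∑ i, normalize (P i - x) = 0 := by
  obtain ⟨x, hx⟩ := exists_forall_sumDist_le P
  have hmin : IsLocalMin (sumDist P) x := Eventually.of_forall hx
  have hxP (i) : x ≠ P i := fun hi ↦ (h i).not_ge <|
    norm_sum_normalize_le_one_of_isLocalMin (hi ▸ hmin) fun j hj ↦ hP.ne hj
  exact ⟨x, hxP, sum_normalize_eq_zero_of_isLocalMin hmin hxP⟩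

theorem real_inner_sub_normalize_le_dist (p x y : E) : ⟪p - y, normalize (p - x)⟫ ≤ dist y p := by
  calc ⟪p - y, normalize (p - x)⟫ ≤ ‖p - y‖ * ‖normalize (p - x)‖ := real_inner_le_norm _ _
    _ ≤ ‖p - y‖ * 1 := by gcongr; exact norm_normalize_le_one _
    _ = dist y p := by rw [mul_one, dist_comm, dist_eq_norm]

theorem sumDist_sub_sumDist_eq_sum {P : ι → E} {x : E} (h : ∑ i, normalize (P i - x) = 0)
    (y : E) : sumDist P y - sumDist P x
      = ∑ i, (dist y (P i) - ⟪P i - y, normalize (P i - x)⟫) := by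
  have hconst : ∑ i, ⟪P i - y, normalize (P i - x)⟫ = sumDist P x := by
    calc ∑ i, ⟪P i - y, normalize (P i - x)⟫
        = ∑ i, ⟪P i - x, normalize (P i - x)⟫ + ⟪x - y, ∑ i, normalize (P i - x)⟫ := by
          simp only [inner_sum, ← Finset.sum_add_distrib, ← inner_add_left, sub_add_sub_cancel]
      _ = sumDist P x := by
          simp [h, sumDist, real_inner_self_normalize, dist_comm x, dist_eq_norm]
  rw [Finset.sum_sub_distrib, hconst, sumDist]

theorem sumDist_le_of_sum_normalize_eq_zero {P : ι → E} {x : E}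
    (h : ∑ i, normalize (P i - x) = 0) (y : E) : sumDist P x ≤ sumDist P y := by
  have hnonneg : 0 ≤ sumDist P y - sumDist P x := by
    rw [sumDist_sub_sumDist_eq_sum h y]
    exact Finset.sum_nonneg fun i _ ↦ sub_nonneg.mpr (real_inner_sub_normalize_le_dist _ _ _)
  linarith

theorem sub_eq_smul_normalize_of_real_inner_eq_dist {p x y : E} (hx : p ≠ x)
    (h : ⟪p - y, normalize (p - x)⟫ = dist y p) :
    y - x = (‖p - x‖ - ‖p - y‖) • normalize (p - x) := by
  have hu : ‖normalize (p - x)‖ = 1 := norm_normalize (sub_ne_zero.mpr hx)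
  rw [dist_comm, dist_eq_norm, ← mul_one ‖p - y‖, ← hu] at h
  have hy := (inner_eq_norm_mul_iff_real.mp h)
  rw [hu, one_smul] at hy
  rw [sub_smul, norm_smul_normalize, ← hy]
  abel

theorem eq_zero_of_smul_eq_smul_of_abs_real_inner_lt_one {u w : E} {a b : ℝ}
    (hu : ‖u‖ = 1) (hw : ‖w‖ = 1) (huw : |⟪u, w⟫| < 1) (h : a • u = b • w) : a = 0 := by
  have hau : a = b * ⟪w, u⟫ := by
    simpa [real_inner_smul_left, real_inner_self_eq_norm_sq, hu] using congrArg (⟪·, u⟫) h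
  have hbw : a * ⟪u, w⟫ = b := by
    simpa [real_inner_smul_left, real_inner_self_eq_norm_sq, hw] using congrArg (⟪·, w⟫) h
  rw [real_inner_comm] at hau
  have : a * (1 - ⟪u, w⟫ ^ 2) = 0 := by rw [← hbw] at hau; linear_combination hau
  have hc : 0 < 1 - ⟪u, w⟫ ^ 2 := by nlinarith [abs_lt.mp huw]
  simpa [hc.ne'] using this

theorem eq_of_sum_normalize_eq_zero {P : ι → E} {x y : E}
    (hx : ∑ i, normalize (P i - x) = 0) (hy : ∑ i, normalize (P i - y) = 0) {i j : ι}
    (hi : P i ≠ x) (hj : P j ≠ x)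
    (hij : |⟪normalize (P i - x), normalize (P j - x)⟫| < 1) : y = x := by
  have hsum : ∑ k, (dist y (P k) - ⟪P k - y, normalize (P k - x)⟫) = 0 := by
    rw [← sumDist_sub_sumDist_eq_sum hx y,
      le_antisymm (sumDist_le_of_sum_normalize_eq_zero hy x)
        (sumDist_le_of_sum_normalize_eq_zero hx y), sub_self]
  have hk (k) : ⟪P k - y, normalize (P k - x)⟫ = dist y (P k) := by
    have := (Finset.sum_eq_zero_iff_of_nonneg fun k _ ↦ sub_nonneg.mpr
      (real_inner_sub_normalize_le_dist _ _ _)).mp hsum k (Finset.mem_univ k)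
    linarith
  have hyi := sub_eq_smul_normalize_of_real_inner_eq_dist hi (hk i)
  have hyj := sub_eq_smul_normalize_of_real_inner_eq_dist hj (hk j)
  have h0 := eq_zero_of_smul_eq_smul_of_abs_real_inner_lt_one (norm_normalize (sub_ne_zero.mpr hi))
    (norm_normalize (sub_ne_zero.mpr hj)) hij (hyi.symm.trans hyj)
  rwa [h0, zero_smul, sub_eq_zero] at hyi

end SumDist

theorem real_inner_normalize_normalize (x y : E) :
    ⟪normalize x, normalize y⟫ = cos (angle x y) := by
  rw [cos_angle, NormedSpace.normalize, NormedSpace.normalize, real_inner_smul_left,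
    real_inner_smul_right]
  ring

theorem cos_two_pi_div_three : cos (2 * π / 3) = -(1 / 2) := by
  rw [show 2 * π / 3 = π - π / 3 by ring, cos_pi_sub, cos_pi_div_three]

theorem angle_eq_two_pi_div_three_iff {x y : E} :
    angle x y = 2 * π / 3 ↔ ⟪normalize x, normalize y⟫ = -(1 / 2) := by
  rw [real_inner_normalize_normalize, ← cos_two_pi_div_three]
  refine ⟨congrArg cos, fun h ↦ injOn_cos ⟨angle_nonneg x y, angle_le_pi x y⟩ ?_ h⟩
  constructor <;> linarith [pi_pos]

theorem one_lt_norm_normalize_add_normalize {x y : E} (hx : x ≠ 0) (hy : y ≠ 0)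
    (h : angle x y < 2 * π / 3) : 1 < ‖normalize x + normalize y‖ := by
  have hcos : -(1 / 2) < ⟪normalize x, normalize y⟫ := by
    rw [real_inner_normalize_normalize, ← cos_two_pi_div_three]
    exact strictAntiOn_cos ⟨angle_nonneg x y, angle_le_pi x y⟩
      ⟨by positivity, by linarith [pi_pos]⟩ h
  have hsq : ‖normalize x + normalize y‖ ^ 2 = 2 + 2 * ⟪normalize x, normalize y⟫ := by
    rw [norm_add_sq_real, norm_normalize hx, norm_normalize hy]; ring
  nlinarith [norm_nonneg (normalize x + normalize y)]

theorem add_add_eq_zero_iff_of_norm_eq_one {u v w : E} (hu : ‖u‖ = 1) (hv : ‖v‖ = 1)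
    (hw : ‖w‖ = 1) :
    u + v + w = 0 ↔ ⟪u, v⟫ = -(1 / 2) ∧ ⟪v, w⟫ = -(1 / 2) ∧ ⟪w, u⟫ = -(1 / 2) := by
  have hsq (a b c : E) (ha : ‖a‖ = 1) (hb : ‖b‖ = 1) (hc : ‖c‖ = 1) (h : a + b + c = 0) :
      ⟪a, b⟫ = -(1 / 2) := by
    have := norm_add_sq_real a b
    rw [eq_neg_of_add_eq_zero_left h, norm_neg, ha, hb, hc] at this
    linarith
  constructor
  · intro h
    refine ⟨hsq u v w hu hv hw h, hsq v w u hv hw hu ?_, hsq w u v hw hu hv ?_⟩ <;>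
      rw [← h] <;> abel
  · rintro ⟨huv, hvw, hwu⟩
    rw [← norm_eq_zero, ← sq_eq_zero_iff, ← real_inner_self_eq_norm_sq]
    simp only [inner_add_left, inner_add_right, real_inner_self_eq_norm_sq, hu, hv, hw]
    rw [real_inner_comm u v, real_inner_comm v w, real_inner_comm w u]
    linarith

theorem angles_eq_two_pi_div_three_iff {x y z : E} (hx : x ≠ 0) (hy : y ≠ 0) (hz : z ≠ 0) :
    angle x y = 2 * π / 3 ∧ angle y z = 2 * π / 3 ∧ angle z x = 2 * π / 3 ↔
      normalize x + normalize y + normalize z = 0 := by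
  simp only [angle_eq_two_pi_div_three_iff]
  exact (add_add_eq_zero_iff_of_norm_eq_one (norm_normalize hx) (norm_normalize hy)
    (norm_normalize hz)).symm

theorem AffineBasis.mem_interior_convexHull_of_sum_smul_sub_eq_zero {ι : Type*} [Fintype ι]
    (b : AffineBasis ι ℝ E) {x : E} {w : ι → ℝ} (hw : ∀ i, 0 < w i)
    (h : ∑ i, w i • (b i - x) = 0) : x ∈ interior (convexHull ℝ (range b)) := by
  obtain ⟨i₀⟩ := b.nonempty
  have hW : 0 < ∑ i, w i := Finset.sum_pos (fun i _ ↦ hw i) ⟨i₀, Finset.mem_univ _⟩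
  set w' := fun i ↦ (∑ j, w j)⁻¹ * w i
  have hw' : ∑ i, w' i = 1 := by simp [w', ← Finset.mul_sum, hW.ne']
  have hx : Finset.univ.affineCombination ℝ b w' = x := by
    rw [Finset.affineCombination_eq_weightedVSubOfPoint_vadd_of_sum_eq_one _ _ _ hw' x,
      Finset.weightedVSubOfPoint_apply]
    simp [w', mul_smul, ← Finset.smul_sum, h]
  rw [b.interior_convexHull, ← hx]
  intro i
  rw [b.coord_apply_combination_of_mem (Finset.mem_univ i) hw']
  exact mul_pos (inv_pos.mpr hW) (hw i)

theorem mem_interior_convexHull_of_sum_normalize_eq_zero [FiniteDimensional ℝ E] {ι : Type*}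
    [Fintype ι] {P : ι → E} (hind : AffineIndependent ℝ P)
    (hcard : Fintype.card ι = Module.finrank ℝ E + 1) {x : E} (hx : ∀ i, x ≠ P i)
    (h : ∑ i, normalize (P i - x) = 0) : x ∈ interior (convexHull ℝ (range P)) :=
  (⟨P, hind, hind.affineSpan_eq_top_iff_card_eq_finrank_add_one.mpr hcard⟩ : AffineBasis ι ℝ E)
    |>.mem_interior_convexHull_of_sum_smul_sub_eq_zero
      (fun i ↦ inv_pos.mpr (norm_pos_iff.mpr (sub_ne_zero.mpr (hx i).symm))) h

theorem range_vecCons_three {α : Type*} (a b c : α) : range ![a, b, c] = {a, b, c} := by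
  rw [Matrix.range_cons, Matrix.range_cons_cons_empty]; rfl

section Triangle

variable {A B C : E}

theorem ne_of_angle_eq_two_pi_div_three {x : E}
    (h : EuclideanGeometry.angle A x B = 2 * π / 3) : A ≠ x ∧ B ≠ x := by
  constructor <;> rintro rfl
  · rw [EuclideanGeometry.angle_self_left] at h; linarith [pi_pos]
  · rw [EuclideanGeometry.angle_self_right] at h; linarith [pi_pos]

theorem angles_eq_two_pi_div_three_iff_sum_normalize_eq_zero {x : E} (hA : A ≠ x) (hB : B ≠ x)
    (hC : C ≠ x) :
    (EuclideanGeometry.angle A x B = 2 * π / 3 ∧ EuclideanGeometry.angle B x C = 2 * π / 3 ∧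
      EuclideanGeometry.angle C x A = 2 * π / 3) ↔ ∑ i, normalize (![A, B, C] i - x) = 0 := by
  simpa [Fin.sum_univ_three, EuclideanGeometry.angle] using
    angles_eq_two_pi_div_three_iff (sub_ne_zero.mpr hA) (sub_ne_zero.mpr hB) (sub_ne_zero.mpr hC)

theorem one_lt_norm_sum_normalize_sub_of_angles_lt (hABC : Function.Injective ![A, B, C])
    (hA : EuclideanGeometry.angle B A C < 2 * π / 3)
    (hB : EuclideanGeometry.angle A B C < 2 * π / 3)
    (hC : EuclideanGeometry.angle A C B < 2 * π / 3) (i : Fin 3) :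
    1 < ‖∑ j, normalize (![A, B, C] j - ![A, B, C] i)‖ := by
  have hP (j k : Fin 3) (h : j ≠ k) : ![A, B, C] j - ![A, B, C] k ≠ 0 :=
    sub_ne_zero.mpr (hABC.ne h)
  fin_cases i <;>
    simp only [Fin.zero_eta, Fin.mk_one, Fin.reduceFinMk, Fin.isValue, Matrix.cons_val_zero,
      Matrix.cons_val_one, Matrix.cons_val, Fin.sum_univ_three, sub_self, normalize_zero_eq_zero,
      zero_add, add_zero]
  · exact one_lt_norm_normalize_add_normalize (hP 1 0 (by decide)) (hP 2 0 (by decide)) hA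
  · exact one_lt_norm_normalize_add_normalize (hP 0 1 (by decide)) (hP 2 1 (by decide)) hB
  · exact one_lt_norm_normalize_add_normalize (hP 0 2 (by decide)) (hP 1 2 (by decide)) hC

end Triangle

theorem existsUnique_interior_point_with_angles_two_pi_div_three
    (P₁ P₂ P₃ : EuclideanSpace ℝ (Fin 2))
    (hind : AffineIndependent ℝ ![P₁, P₂, P₃])
    (h₁ : EuclideanGeometry.angle P₂ P₁ P₃ < 2 * π / 3)
    (h₂ : EuclideanGeometry.angle P₁ P₂ P₃ < 2 * π / 3)
    (h₃ : EuclideanGeometry.angle P₁ P₃ P₂ < 2 * π / 3) :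
    ∃! F : EuclideanSpace ℝ (Fin 2),
      F ∈ interior (convexHull ℝ {P₁, P₂, P₃}) ∧
      EuclideanGeometry.angle P₁ F P₂ = 2 * π / 3 ∧
      EuclideanGeometry.angle P₂ F P₃ = 2 * π / 3 ∧
      EuclideanGeometry.angle P₃ F P₁ = 2 * π / 3 := by
  obtain ⟨F, hFP, hF0⟩ := exists_ne_and_sum_normalize_eq_zero hind.injective
    (one_lt_norm_sum_normalize_sub_of_angles_lt hind.injective h₁ h₂ h₃)
  have hFangles := (angles_eq_two_pi_div_three_iff_sum_normalize_eq_zero (hFP 0).symm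
    (hFP 1).symm (hFP 2).symm).mpr hF0
  refine ⟨F, ⟨?_, hFangles⟩, fun Y ⟨_, hY⟩ ↦ ?_⟩
  · rw [← range_vecCons_three]
    exact mem_interior_convexHull_of_sum_normalize_eq_zero hind (by simp) hFP hF0
  · obtain ⟨hY₁, hY₂⟩ := ne_of_angle_eq_two_pi_div_three hY.1
    have hY0 := (angles_eq_two_pi_div_three_iff_sum_normalize_eq_zero hY₁ hY₂
      (ne_of_angle_eq_two_pi_div_three hY.2.1).2).mp hY
    have h₁₂ : ⟪normalize (P₁ - F), normalize (P₂ - F)⟫ = -(1 / 2) :=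
      angle_eq_two_pi_div_three_iff.mp hFangles.1
    refine eq_of_sum_normalize_eq_zero hF0 hY0 (hFP 0).symm (hFP 1).symm (i := 0) (j := 1) ?_
    norm_num [h₁₂]
end

section
/- Let P₁, P₂, P₃ be three affinely independent points in the Euclidean plane ℝ² and define f : ℝ² → ℝ by f(P) = dist(P, P₁) + dist(P, P₂) + dist(P, P₃). If the interior angle at the vertex P₁ satisfies ∠P₂P₁P₃ < 2π/3, then P₁ is not a global minimizer of f; that is, there exists a point P ∈ ℝ² with f(P) < f(P₁). -/
/-!
Let `u`, `v` be the unit vectors from `P₁` towards `P₂`, `P₃`. Moving from `P₁` to `P₁ + t (u + v)`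
changes `f` by `t ‖u + v‖ - t ‖u + v‖ ^ 2 + O(t ^ 2)`, since each of the two distances to `P₂`, `P₃`
drops to first order by the projection of the step onto `u`, resp. `v`. As
`‖u + v‖ ^ 2 = 2 + 2 cos ∠P₂P₁P₃`, the first-order term is negative exactly when the angle is less
than `2π/3`.
-/

open Real EuclideanGeometry RealInnerProductSpace

section InnerProductSpace

variable {V : Type*} [NormedAddCommGroup V] [InnerProductSpace ℝ V]

theorem norm_smul_sub_le {u : V} (hu : ‖u‖ = 1) {r : ℝ} (hr : 0 < r) (w : V) :
    ‖r • u - w‖ ≤ r - ⟪u, w⟫ + ‖w‖ ^ 2 / (2 * r) := by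
  have hsq : ‖r • u - w‖ ^ 2 = r ^ 2 - 2 * r * ⟪u, w⟫ + ‖w‖ ^ 2 := by
    rw [norm_sub_sq_real, norm_smul, real_inner_smul_left, Real.norm_of_nonneg hr.le, hu]
    ring
  rw [← sub_nonneg]
  have hgap : r - ⟪u, w⟫ + ‖w‖ ^ 2 / (2 * r) - ‖r • u - w‖
      = (r - ‖r • u - w‖) ^ 2 / (2 * r) := by
    field_simp
    linear_combination -hsq
  rw [hgap]
  positivity

theorem one_lt_norm_add_of_angle_lt {u v : V} (hu : ‖u‖ = 1) (hv : ‖v‖ = 1)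
    (h : InnerProductGeometry.angle u v < 2 * π / 3) : 1 < ‖u + v‖ := by
  have hcos : -(1 / 2) < ⟪u, v⟫ := by
    have := Real.cos_lt_cos_of_nonneg_of_le_pi (InnerProductGeometry.angle_nonneg u v)
      (by linarith [pi_pos]) h
    rwa [InnerProductGeometry.cos_angle, hu, hv, mul_one, div_one,
      show 2 * π / 3 = π - π / 3 by ring, cos_pi_sub, cos_pi_div_three] at this
  have hsq : ‖u + v‖ ^ 2 = 2 + 2 * ⟪u, v⟫ := by
    rw [norm_add_sq_real, hu, hv]
    ring
  nlinarith [norm_nonneg (u + v)]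

theorem exists_norm_add_norm_sub_add_norm_sub_lt {u v : V} (hu : ‖u‖ = 1) (hv : ‖v‖ = 1)
    (huv : 1 < ‖u + v‖) {r₁ r₂ : ℝ} (hr₁ : 0 < r₁) (hr₂ : 0 < r₂) :
    ∃ w : V, ‖w‖ + ‖r₁ • u - w‖ + ‖r₂ • v - w‖ < r₁ + r₂ := by
  set s := ‖u + v‖
  set K := 1 / (2 * r₁) + 1 / (2 * r₂)
  have hK : 0 < K := by positivity
  have bound : ∀ t : ℝ, 0 < t →
      ‖t • (u + v)‖ + ‖r₁ • u - t • (u + v)‖ + ‖r₂ • v - t • (u + v)‖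
        ≤ r₁ + r₂ - t * (s ^ 2 - s) + t ^ 2 * s ^ 2 * K := by
    intro t ht
    have h₁ := norm_smul_sub_le hu hr₁ (t • (u + v))
    have h₂ := norm_smul_sub_le hv hr₂ (t • (u + v))
    have hinner : ⟪u, t • (u + v)⟫ + ⟪v, t • (u + v)⟫ = t * s ^ 2 := by
      rw [real_inner_smul_right, real_inner_smul_right, ← mul_add, ← inner_add_left,
        real_inner_self_eq_norm_sq]
    have hnorm : ‖t • (u + v)‖ = t * s := by rw [norm_smul, Real.norm_of_nonneg ht.le]
    rw [hnorm] at h₁ h₂ ⊢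
    have hK' : t ^ 2 * s ^ 2 * K = (t * s) ^ 2 / (2 * r₁) + (t * s) ^ 2 / (2 * r₂) := by
      simp only [K]
      ring
    linarith
  -- `t` makes the quadratic error exactly half of the first-order gain `t * (s ^ 2 - s)`.
  set t := (s - 1) / (2 * s * K)
  have ht : 0 < t := by
    have : 0 < s - 1 := by linarith
    positivity
  have hts : t * s * K = (s - 1) / 2 := by
    simp only [t]
    field_simp
  refine ⟨t • (u + v), (bound t ht).trans_lt ?_⟩
  have hgain : 0 < t * s * (s - 1) := mul_pos (mul_pos ht (by linarith)) (by linarith)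
  have herror : t ^ 2 * s ^ 2 * K = t * s * (s - 1) / 2 := by rw [mul_div_assoc, ← hts]; ring
  nlinarith

theorem exists_norm_add_norm_sub_add_norm_sub_lt_of_angle_lt {x y : V} (hx : x ≠ 0) (hy : y ≠ 0)
    (h : InnerProductGeometry.angle x y < 2 * π / 3) :
    ∃ w : V, ‖w‖ + ‖x - w‖ + ‖y - w‖ < ‖x‖ + ‖y‖ := by
  have hx' : 0 < ‖x‖ := norm_pos_iff.2 hx
  have hy' : 0 < ‖y‖ := norm_pos_iff.2 hy
  set u := ‖x‖⁻¹ • x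
  set v := ‖y‖⁻¹ • y
  have hu : ‖u‖ = 1 := norm_smul_inv_norm hx
  have hv : ‖v‖ = 1 := norm_smul_inv_norm hy
  have huv : InnerProductGeometry.angle u v = InnerProductGeometry.angle x y := by
    rw [InnerProductGeometry.angle_smul_left_of_pos _ _ (inv_pos.2 hx'),
      InnerProductGeometry.angle_smul_right_of_pos _ _ (inv_pos.2 hy')]
  have hxu : ‖x‖ • u = x := smul_inv_smul₀ hx'.ne' x
  have hyv : ‖y‖ • v = y := smul_inv_smul₀ hy'.ne' y
  rw [← huv] at h
  simpa only [hxu, hyv] using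
    exists_norm_add_norm_sub_add_norm_sub_lt hu hv (one_lt_norm_add_of_angle_lt hu hv h) hx' hy'

end InnerProductSpace

namespace EuclideanGeometry

variable {V P : Type*} [NormedAddCommGroup V] [InnerProductSpace ℝ V] [MetricSpace P]
  [NormedAddTorsor V P]

theorem exists_dist_add_dist_add_dist_lt_of_angle_lt {A B C : P} (hB : B ≠ A) (hC : C ≠ A)
    (h : ∠ B A C < 2 * π / 3) :
    ∃ X : P, dist X A + dist X B + dist X C < dist A B + dist A C := by
  obtain ⟨w, hw⟩ := exists_norm_add_norm_sub_add_norm_sub_lt_of_angle_lt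
    (vsub_ne_zero.2 hB) (vsub_ne_zero.2 hC) h
  have hdist : ∀ Q : P, dist (w +ᵥ A) Q = ‖(Q -ᵥ A) - w‖ := fun Q => by
    rw [dist_eq_norm_vsub V, vadd_vsub_assoc, ← neg_vsub_eq_vsub_rev, ← norm_neg]
    congr 1
    abel
  refine ⟨w +ᵥ A, ?_⟩
  rwa [dist_vadd_left, hdist, hdist, dist_comm A, dist_comm A, dist_eq_norm_vsub V,
    dist_eq_norm_vsub V]

end EuclideanGeometry

theorem vertex_not_min_of_small_angle
    (P₁ P₂ P₃ : EuclideanSpace ℝ (Fin 2))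
    (hind : AffineIndependent ℝ ![P₁, P₂, P₃])
    (f : EuclideanSpace ℝ (Fin 2) → ℝ)
    (hf : ∀ P, f P = dist P P₁ + dist P P₂ + dist P P₃)
    (hangle : EuclideanGeometry.angle P₂ P₁ P₃ < 2 * π / 3) :
    ∃ P : EuclideanSpace ℝ (Fin 2), f P < f P₁ := by
  have h₂₁ : P₂ ≠ P₁ := hind.injective.ne (by decide : (1 : Fin 3) ≠ 0)
  have h₃₁ : P₃ ≠ P₁ := hind.injective.ne (by decide : (2 : Fin 3) ≠ 0)
  obtain ⟨P, hP⟩ := exists_dist_add_dist_add_dist_lt_of_angle_lt h₂₁ h₃₁ hangle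
  refine ⟨P, ?_⟩
  rwa [hf, hf, dist_self, zero_add]
end
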